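/- Fix a Bellman operator with kernel p, discount γ ∈ [0,1), bounded reward r with ‖Q-values‖ controlled by M = R_max/(1−γ). If two policies π and π̂ satisfy Σ_{a} |π(a|s) − π̂(a|s)| ≤ δ for all s, then the fixed points Q^π and Q^π̂ satisfy ‖Q^π − Q^π̂‖∞ ≤ γ δ M / (1 − γ). -/
import Mathlib


open Finset

noncomputable def bellman {S A : Type*} [Fintype S] [Fintype A]
    (r : S → A → ℝ) (p : S → A → S → ℝ) (π : S → A → ℝ) (γ : ℝ)
    (Q : S → A → ℝ) : S → A → ℝ :=
  fun s a => r s a + γ * ∑ s', p s a s' * ∑ a', π s' a' * Q s' a'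

lemma wsum_abs_le {ι : Type*} [Fintype ι] (w f : ι → ℝ) (C : ℝ)
    (hw : ∀ i, 0 ≤ w i) (hf : ∀ i, |f i| ≤ C) :
    |∑ i, w i * f i| ≤ (∑ i, w i) * C := by
  calc |∑ i, w i * f i| ≤ ∑ i, |w i * f i| := Finset.abs_sum_le_sum_abs _ _
    _ ≤ ∑ i, w i * C := Finset.sum_le_sum fun i _ => by
        rw [abs_mul, abs_of_nonneg (hw i)]
        exact mul_le_mul_of_nonneg_left (hf i) (hw i)
    _ = (∑ i, w i) * C := by rw [Finset.sum_mul]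

lemma wsum_abs_le' {ι : Type*} [Fintype ι] (w f : ι → ℝ) (C : ℝ)
    (hC : 0 ≤ C) (hf : ∀ i, |f i| ≤ C) :
    |∑ i, w i * f i| ≤ (∑ i, |w i|) * C := by
  calc |∑ i, w i * f i| ≤ ∑ i, |w i * f i| := Finset.abs_sum_le_sum_abs _ _
    _ ≤ ∑ i, |w i| * C := Finset.sum_le_sum fun i _ => by
        rw [abs_mul]
        exact mul_le_mul_of_nonneg_left (hf i) (abs_nonneg _)
    _ = (∑ i, |w i|) * C := by rw [Finset.sum_mul]

lemma norm_bellman_fixedPoint_le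
    {S A : Type*} [Fintype S] [Fintype A] [Nonempty S] [Nonempty A]
    (r : S → A → ℝ) (p : S → A → S → ℝ) (π : S → A → ℝ) (γ Rmax : ℝ)
    (hγ0 : 0 ≤ γ) (hγ1 : γ < 1) (hr : ∀ s a, |r s a| ≤ Rmax)
    (hp_nonneg : ∀ s a s', 0 ≤ p s a s') (hp_sum : ∀ s a, ∑ s', p s a s' = 1)
    (hπ_nonneg : ∀ s a, 0 ≤ π s a) (hπ_sum : ∀ s, ∑ a, π s a = 1)
    (Q : S → A → ℝ) (hQ : bellman r p π γ Q = Q) :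
    ‖Q‖ ≤ Rmax / (1 - γ) := by
  have h1γ : (0:ℝ) < 1 - γ := by linarith
  have hRmax : 0 ≤ Rmax :=
    le_trans (abs_nonneg _) (hr (Classical.arbitrary S) (Classical.arbitrary A))
  have hQ' : ∀ s a, |Q s a| ≤ ‖Q‖ := fun s a => by
    have := (norm_le_pi_norm (Q s) a).trans (norm_le_pi_norm Q s)
    rwa [Real.norm_eq_abs] at this
  have key : ∀ s a, |Q s a| ≤ Rmax + γ * ‖Q‖ := by
    intro s a
    have h := congrFun (congrFun hQ s) a
    rw [← h]; simp only [bellman]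
    have hin : ∀ s', |∑ a', π s' a' * Q s' a'| ≤ ‖Q‖ := fun s' => by
      have := wsum_abs_le (π s') (Q s') ‖Q‖ (hπ_nonneg s') (fun a' => hQ' s' a')
      rwa [hπ_sum s', one_mul] at this
    have hout : |∑ s', p s a s' * ∑ a', π s' a' * Q s' a'| ≤ ‖Q‖ := by
      have := wsum_abs_le (p s a) _ ‖Q‖ (hp_nonneg s a) hin
      rwa [hp_sum s a, one_mul] at this
    calc |r s a + γ * ∑ s', p s a s' * ∑ a', π s' a' * Q s' a'|
        ≤ |r s a| + |γ * ∑ s', p s a s' * ∑ a', π s' a' * Q s' a'| := abs_add_le _ _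
      _ ≤ Rmax + γ * ‖Q‖ := by
          rw [abs_mul, abs_of_nonneg hγ0]
          exact add_le_add (hr s a) (mul_le_mul_of_nonneg_left hout hγ0)
  have hN2 : ‖Q‖ ≤ Rmax + γ * ‖Q‖ := by
    have hnn : 0 ≤ Rmax + γ * ‖Q‖ := by positivity
    rw [pi_norm_le_iff_of_nonneg hnn]
    intro s
    rw [pi_norm_le_iff_of_nonneg hnn]
    intro a
    rw [Real.norm_eq_abs]
    exact key s a
  rw [le_div_iff₀ h1γ]
  nlinarith [norm_nonneg Q]

/-- Sensitivity of the fixed point to the policy: if `Σ_a |π(a|s) − π̂(a|s)| ≤ δ` for all `s`,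
then with `M = R_max/(1−γ)`, the fixed points satisfy `‖Q^π − Q^π̂‖∞ ≤ γ δ M / (1 − γ)`. -/
theorem bellman_fixedPoint_policy_sensitivity
    {S A : Type*} [Fintype S] [Fintype A] [Nonempty S] [Nonempty A]
    (r : S → A → ℝ) (p : S → A → S → ℝ) (π πhat : S → A → ℝ) (γ Rmax δ : ℝ)
    (hγ0 : 0 ≤ γ) (hγ1 : γ < 1) (hr : ∀ s a, |r s a| ≤ Rmax)
    (hp_nonneg : ∀ s a s', 0 ≤ p s a s') (hp_sum : ∀ s a, ∑ s', p s a s' = 1)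
    (hπ_nonneg : ∀ s a, 0 ≤ π s a) (hπ_sum : ∀ s, ∑ a, π s a = 1)
    (hπhat_nonneg : ∀ s a, 0 ≤ πhat s a) (hπhat_sum : ∀ s, ∑ a, πhat s a = 1)
    (hδ : ∀ s, ∑ a, |π s a - πhat s a| ≤ δ)
    (Qπ Qπhat : S → A → ℝ)
    (hQπ : bellman r p π γ Qπ = Qπ)
    (hQπhat : bellman r p πhat γ Qπhat = Qπhat) :
    ‖Qπ - Qπhat‖ ≤ γ * δ * (Rmax / (1 - γ)) / (1 - γ) := by
  have h1γ : (0:ℝ) < 1 - γ := by linarith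
  have hRmax : 0 ≤ Rmax :=
    le_trans (abs_nonneg _) (hr (Classical.arbitrary S) (Classical.arbitrary A))
  set M : ℝ := Rmax / (1 - γ) with hM
  have hM0 : 0 ≤ M := by positivity
  have hδ0 : 0 ≤ δ :=
    le_trans (Finset.sum_nonneg fun a _ => abs_nonneg _) (hδ (Classical.arbitrary S))
  set D : ℝ := ‖Qπ - Qπhat‖ with hD
  have hD0 : 0 ≤ D := norm_nonneg _
  have hQπM : ∀ s a, |Qπ s a| ≤ M := by
    intro s a
    have hb := norm_bellman_fixedPoint_le r p π γ Rmax hγ0 hγ1 hr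
      hp_nonneg hp_sum hπ_nonneg hπ_sum Qπ hQπ
    have := (norm_le_pi_norm (Qπ s) a).trans (norm_le_pi_norm Qπ s)
    rw [Real.norm_eq_abs] at this
    exact this.trans hb
  have hQdiff : ∀ s a, |Qπ s a - Qπhat s a| ≤ D := fun s a => by
    have := (norm_le_pi_norm ((Qπ - Qπhat) s) a).trans (norm_le_pi_norm (Qπ - Qπhat) s)
    simpa [Real.norm_eq_abs] using this
  have key : ∀ s a, |Qπ s a - Qπhat s a| ≤ γ * (δ * M + D) := by
    intro s a
    have hdiff : Qπ s a - Qπhat s a =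
        γ * ∑ s', p s a s' *
          ((∑ a', π s' a' * Qπ s' a') - ∑ a', πhat s' a' * Qπhat s' a') := by
      conv_lhs => rw [← congrFun (congrFun hQπ s) a, ← congrFun (congrFun hQπhat s) a]
      simp only [bellman, mul_sub, Finset.sum_sub_distrib]
      ring
    rw [hdiff]
    have hinner : ∀ s',
        |(∑ a', π s' a' * Qπ s' a') - ∑ a', πhat s' a' * Qπhat s' a'| ≤ δ * M + D := by
      intro s'
      have hsplit : (∑ a', π s' a' * Qπ s' a') - ∑ a', πhat s' a' * Qπhat s' a' =
          (∑ a', (π s' a' - πhat s' a') * Qπ s' a')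
            + ∑ a', πhat s' a' * (Qπ s' a' - Qπhat s' a') := by
        rw [← Finset.sum_add_distrib, ← Finset.sum_sub_distrib]
        apply Finset.sum_congr rfl
        intros; ring
      rw [hsplit]
      refine (abs_add_le _ _).trans (add_le_add ?_ ?_)
      · have h1 := wsum_abs_le' (fun a' => π s' a' - πhat s' a') (Qπ s') M hM0
          (fun a' => hQπM s' a')
        refine h1.trans ?_
        exact mul_le_mul_of_nonneg_right (hδ s') hM0
      · have h2 := wsum_abs_le (πhat s') (fun a' => Qπ s' a' - Qπhat s' a') D
          (hπhat_nonneg s') (fun a' => hQdiff s' a')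
        rwa [hπhat_sum s', one_mul] at h2
    have hout := wsum_abs_le (p s a) _ (δ * M + D) (hp_nonneg s a) hinner
    rw [hp_sum s a, one_mul] at hout
    calc |γ * ∑ s', p s a s' *
          ((∑ a', π s' a' * Qπ s' a') - ∑ a', πhat s' a' * Qπhat s' a')|
        = γ * |∑ s', p s a s' *
          ((∑ a', π s' a' * Qπ s' a') - ∑ a', πhat s' a' * Qπhat s' a')| := by
          rw [abs_mul, abs_of_nonneg hγ0]
      _ ≤ γ * (δ * M + D) := mul_le_mul_of_nonneg_left hout hγ0
  have hDle : D ≤ γ * (δ * M + D) := by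
    have hnn : 0 ≤ γ * (δ * M + D) := by positivity
    rw [hD, pi_norm_le_iff_of_nonneg hnn]
    intro s
    rw [pi_norm_le_iff_of_nonneg hnn]
    intro a
    rw [Real.norm_eq_abs]
    simpa using key s a
  have hfin : D * (1 - γ) ≤ γ * δ * M := by nlinarith
  rw [hM] at hfin ⊢
  rw [le_div_iff₀ h1γ]
  linarith
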